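/- For every i ≥ 1, ker d_i is contained in the radical rad(kC^i ⊗_{Λ_0} Λ) = (kC^i ⊗_{Λ_0} Λ)·J(Λ) of the right Λ-module kC^i ⊗_{Λ_0} Λ, where J(Λ) is the Jacobson radical of Λ. -/

import Mathlib

set_option maxRecDepth 16000
set_option linter.unusedSectionVars false
set_option maxHeartbeats 1000000

open Finsupp

variable (k : Type) [Field k] (X : Type) [PartialOrder X] [Fintype X] [DecidableEq X]

/-- Ambient type in which the `i`-cycles live: `Amb 0 = X`,
`Amb (i+1) = (Amb i →₀ k) × X`. -/
def Amb : ℕ → Type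
  | 0 => X
  | i + 1 => ((Amb i) →₀ k) × X

/-- The "vertex" (second coordinate) of an element of `Amb i`. -/
def vtx : ∀ i : ℕ, Amb k X i → X
  | 0, a => a
  | _ + 1, p => p.2

/-- The ambient boundary map `∂_{i+1} : k C^{i+1} → k C^i`, defined on the whole
free module `Amb (i+1) →₀ k` by `(w, z) ↦ w`. -/
noncomputable def bd (i : ℕ) : (Amb k X (i + 1) →₀ k) →ₗ[k] (Amb k X i →₀ k) :=
  Finsupp.linearCombination k (fun p : Amb k X (i + 1) => p.1)

/-- `(ker ∂_{i+1})_z`: the subspace of elements of `ker ∂_{i+1}`, supported on `C^{i+1}`,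
all of whose support elements have second coordinate `< z`. -/
noncomputable def Kz (C : ∀ i : ℕ, Set (Amb k X i)) (i : ℕ) (z : X) :
    Submodule k (Amb k X (i + 1) →₀ k) :=
  LinearMap.ker (bd k X i) ⊓ Finsupp.supported k k (C (i + 1)) ⊓
    Finsupp.supported k k {p : Amb k X (i + 1) | vtx k X (i + 1) p < z}

/-- `(ker ∂_{i+1})_{z^-} = Σ_{z' ⋖ z} (ker ∂_{i+1})_{z'}`. -/
noncomputable def Kpred (C : ∀ i : ℕ, Set (Amb k X i)) (i : ℕ) (z : X) :
    Submodule k (Amb k X (i + 1) →₀ k) :=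
  ⨆ z' ∈ {z' : X | z' ⋖ z}, Kz k X C i z'

/-- `B^{i+2}_z'`: the set of `w` with `(w, z) ∈ C^{i+2}`. -/
def Bset (C : ∀ i : ℕ, Set (Amb k X i)) (i : ℕ) (z : X) : Set (Amb k X (i + 1) →₀ k) :=
  {w | (⟨w, z⟩ : Amb k X (i + 2)) ∈ C (i + 2)}

/-- The data of an admissible choice of `i`-cycles `C^i` for the poset `X` at the point `x`:
`C^0 = {x}`, `C^1 = {(x,y) : y ∈ x⁺}` and, recursively, for each `z` the set
`B^{i+2}_z' = {w | (w,z) ∈ C^{i+2}}` is a basis of a complement of `(ker ∂_{i+1})_{z⁻}`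
inside `(ker ∂_{i+1})_z`. -/
structure CycleData (x : X) : Type 1 where
  C : ∀ i : ℕ, Set (Amb k X i)
  hC0 : C 0 = {x}
  hC1 : C 1 = {p : Amb k X 1 | ∃ y : X, x ⋖ y ∧ p = ⟨Finsupp.single x 1, y⟩}
  indep : ∀ (i : ℕ) (z : X),
    LinearIndependent k (Subtype.val : Bset k X C i z → (Amb k X (i + 1) →₀ k))
  disj : ∀ (i : ℕ) (z : X),
    Submodule.span k (Bset k X C i z) ⊓ Kpred k X C i z = ⊥
  compl : ∀ (i : ℕ) (z : X),
    Submodule.span k (Bset k X C i z) ⊔ Kpred k X C i z = Kz k X C i z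

variable [DecidableRel (α := X) (· ≤ ·)]

instance : DecidableRel (α := X) (· < ·) := fun a b =>
  decidable_of_iff (a ≤ b ∧ ¬ b ≤ a) lt_iff_le_not_ge.symm

instance : LocallyFiniteOrder X := Fintype.toLocallyFiniteOrder

/-- The incidence algebra `Λ = kQ/I` of the poset `X`: functions on the pairs `a ≤ b`,
`c_{a,b}` corresponding to the characteristic function of `(a,b)`. -/
abbrev Lam := IncidenceAlgebra k X

/-- `Λ₀`, the (commutative, semisimple) subalgebra of `Λ` spanned by the stationary paths
`c_a`, identified with `k^X`. -/
abbrev Lam0 := X → k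

/-- The path `c_{a,b}` for `a ≤ b` (and junk value `0` if `a ≰ b`). -/
def cpath (a b : X) : Lam k X :=
  ⟨fun a' b' => if a' = a ∧ b' = b ∧ a ≤ b then 1 else 0, by
    intro a' b' h
    simp only [ite_eq_right_iff, one_ne_zero]
    rintro ⟨rfl, rfl, hab⟩
    exact (h hab).elim⟩

/-- The stationary path `c_a = c_{a,a}`. -/
def statp (a : X) : Lam k X := cpath k X a a

/-- The embedding of `Λ₀ = k^X` into `Λ` as the span of the stationary paths. -/
def diagHom : Lam0 k X →+* Lam k X where
  toFun f := ⟨fun a b => if a = b then f a else 0, by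
    intro a b h
    simp only [ite_eq_right_iff]
    rintro rfl
    exact (h le_rfl).elim⟩
  map_one' := by
    ext a b _
    simp [IncidenceAlgebra.one_apply]
  map_mul' f g := by
    ext a b hab
    rcases eq_or_ne a b with rfl | hne
    · simp [IncidenceAlgebra.mul_apply]
    · simp only [IncidenceAlgebra.coe_mk, IncidenceAlgebra.mul_apply, if_neg hne]
      rw [Finset.sum_eq_zero]
      intro x hx
      rcases eq_or_ne a x with rfl | hax
      · rw [if_neg hne]; ring
      · rw [if_neg hax]; ring
  map_zero' := by ext a b _; simp
  map_add' f g := by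
    ext a b hab
    rcases eq_or_ne a b with rfl | hne
    · simp [IncidenceAlgebra.add_apply]
    · simp [IncidenceAlgebra.add_apply, if_neg hne]

/-- `Λ` is a `Λ₀`-module via left multiplication through `diagHom`. -/
noncomputable instance : Module (Lam0 k X) (Lam k X) := Module.compHom _ (diagHom k X)

/-- The endomorphism of the free module `Amb i →₀ k` given by `f ∈ Λ₀ = k^X`, where `c_a`
acts on a basis element `p` by `δ_{vtx p, a}`. -/
noncomputable def phiAmbFun (i : ℕ) (f : Lam0 k X) :
    (Amb k X i →₀ k) →ₗ[k] (Amb k X i →₀ k) :=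
  Finsupp.lsum k fun p => f (vtx k X i p) • Finsupp.lsingle p

theorem phiAmbFun_single (i : ℕ) (f : Lam0 k X) (p : Amb k X i) (c : k) :
    phiAmbFun k X i f (Finsupp.single p c) = f (vtx k X i p) • Finsupp.single p c := by
  rw [phiAmbFun, Finsupp.lsum_single, LinearMap.smul_apply, Finsupp.lsingle_apply]

/-- The action of `Λ₀` on the free module `Amb i →₀ k` as a ring homomorphism to
endomorphisms. -/
noncomputable def phiAmb (i : ℕ) : Lam0 k X →+* Module.End k (Amb k X i →₀ k) where
  toFun f := phiAmbFun k X i f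
  map_one' := by
    apply Finsupp.lhom_ext
    intro p c
    rw [phiAmbFun_single, Module.End.one_apply, Pi.one_apply, one_smul]
  map_mul' f g := by
    apply Finsupp.lhom_ext
    intro p c
    show phiAmbFun k X i (f * g) (Finsupp.single p c) =
      (phiAmbFun k X i f * phiAmbFun k X i g) (Finsupp.single p c)
    rw [Module.End.mul_apply, phiAmbFun_single, phiAmbFun_single, map_smul,
      phiAmbFun_single, smul_smul, Pi.mul_apply, mul_comm]
  map_zero' := by
    apply Finsupp.lhom_ext
    intro p c
    rw [phiAmbFun_single, Pi.zero_apply, zero_smul, LinearMap.zero_apply]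
  map_add' f g := by
    apply Finsupp.lhom_ext
    intro p c
    rw [phiAmbFun_single, LinearMap.add_apply, phiAmbFun_single, phiAmbFun_single,
      Pi.add_apply, add_smul]

theorem phiAmb_apply (i : ℕ) (f : Lam0 k X) (g : Amb k X i →₀ k) (q : Amb k X i) :
    phiAmb k X i f g q = f (vtx k X i q) * g q := by
  induction g using Finsupp.induction_linear with
  | zero => simp
  | add a b ha hb => simp [ha, hb, mul_add]
  | single p c =>
    show phiAmbFun k X i f (Finsupp.single p c) q = _
    rw [phiAmbFun_single]
    rcases eq_or_ne p q with rfl | hpq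
    · simp [Finsupp.single_apply]
    · classical
      rw [Finsupp.smul_apply, Finsupp.single_apply, if_neg hpq, smul_zero, mul_zero]

theorem phiAmb_mem_supported (i : ℕ) (f : Lam0 k X) (s : Set (Amb k X i))
    (g : Amb k X i →₀ k) (hg : g ∈ Finsupp.supported k k s) :
    phiAmb k X i f g ∈ Finsupp.supported k k s := by
  rw [Finsupp.mem_supported'] at hg ⊢
  intro p hp
  rw [phiAmb_apply, hg p hp, mul_zero]

/-- The action of `Λ₀` on `kC^i` (the span of the `i`-cycles). -/
noncomputable def phiKC (C : ∀ i : ℕ, Set (Amb k X i)) (i : ℕ) :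
    Lam0 k X →+* Module.End k ↥(Finsupp.supported k k (C i)) where
  toFun f := (phiAmb k X i f).restrict
    (fun g hg => phiAmb_mem_supported k X i f (C i) g hg)
  map_one' := by
    apply LinearMap.ext
    rintro ⟨g, hg⟩
    apply Subtype.ext
    simp [LinearMap.restrict_apply]
  map_mul' f g := by
    apply LinearMap.ext
    rintro ⟨h, hh⟩
    apply Subtype.ext
    simp [LinearMap.restrict_apply]
  map_zero' := by
    apply LinearMap.ext
    rintro ⟨g, hg⟩
    apply Subtype.ext
    simp [LinearMap.restrict_apply]
  map_add' f g := by
    apply LinearMap.ext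
    rintro ⟨h, hh⟩
    apply Subtype.ext
    simp [LinearMap.restrict_apply]

/-- `kC^i` as a `Λ₀`-module. -/
noncomputable instance (C : ∀ i : ℕ, Set (Amb k X i)) (i : ℕ) :
    Module (Lam0 k X) ↥(Finsupp.supported k k (C i)) :=
  Module.compHom _ (phiKC k X C i)

open scoped TensorProduct

/-- Right multiplication by `a ∈ Λ` as a `Λ₀`-linear endomorphism of `Λ`. -/
noncomputable def rmulL (a : Lam k X) : Lam k X →ₗ[Lam0 k X] Lam k X where
  toFun b := b * a
  map_add' b c := add_mul b c a
  map_smul' f b := by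
    show (diagHom k X f * b) * a = diagHom k X f * (b * a)
    rw [mul_assoc]

/-- The right `Λ`-module structure (i.e. left `Λᵐᵒᵖ`-module structure) on `M ⊗_{Λ₀} Λ`,
`Λ` being a `Λ₀`-`Λ`-bimodule via right multiplication. -/
noncomputable instance modOpTensor (M : Type) [AddCommGroup M] [Module (Lam0 k X) M] :
    Module (Lam k X)ᵐᵒᵖ (M ⊗[Lam0 k X] Lam k X) where
  smul a t := LinearMap.lTensor M (rmulL k X a.unop) t
  one_smul t := by
    show LinearMap.lTensor M (rmulL k X (1 : (Lam k X)ᵐᵒᵖ).unop) t = t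
    have : rmulL k X ((1 : (Lam k X)ᵐᵒᵖ).unop) = LinearMap.id := by
      apply LinearMap.ext; intro b
      show b * 1 = b
      rw [mul_one]
    rw [this, LinearMap.lTensor_id, LinearMap.id_apply]
  mul_smul a b t := by
    show LinearMap.lTensor M (rmulL k X (a * b).unop) t =
      LinearMap.lTensor M (rmulL k X a.unop) (LinearMap.lTensor M (rmulL k X b.unop) t)
    have : rmulL k X ((a * b).unop) = (rmulL k X a.unop).comp (rmulL k X b.unop) := by
      apply LinearMap.ext; intro c
      show c * (b.unop * a.unop) = (c * b.unop) * a.unop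
      rw [mul_assoc]
    rw [this, LinearMap.lTensor_comp, LinearMap.comp_apply]
  smul_zero a := map_zero _
  smul_add a s t := map_add _ s t
  add_smul a b t := by
    show LinearMap.lTensor M (rmulL k X (a + b).unop) t =
      LinearMap.lTensor M (rmulL k X a.unop) t + LinearMap.lTensor M (rmulL k X b.unop) t
    have : rmulL k X ((a + b).unop) = rmulL k X a.unop + rmulL k X b.unop := by
      apply LinearMap.ext; intro c
      show c * (a.unop + b.unop) = c * a.unop + c * b.unop
      rw [mul_add]
    rw [this, LinearMap.lTensor_add, LinearMap.add_apply]
  zero_smul t := by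
    show LinearMap.lTensor M (rmulL k X (0 : (Lam k X)ᵐᵒᵖ).unop) t = 0
    have : rmulL k X ((0 : (Lam k X)ᵐᵒᵖ).unop) = 0 := by
      apply LinearMap.ext; intro c
      show c * 0 = 0
      rw [mul_zero]
    rw [this, LinearMap.lTensor_zero, LinearMap.zero_apply]

theorem opSmul_tmul (M : Type) [AddCommGroup M] [Module (Lam0 k X) M]
    (a : Lam k X) (m : M) (b : Lam k X) :
    (MulOpposite.op a) • (m ⊗ₜ[Lam0 k X] b) = m ⊗ₜ[Lam0 k X] (b * a) := rfl

/-- The sum `q_z = Σ_{u ≤ z} c_{u,z}` of the paths ending at `z`. -/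
noncomputable def qel (z : X) : Lam k X :=
  ∑ u ∈ Finset.univ.filter (· ≤ z), cpath k X u z

/-- `kC^i ⊗_{Λ₀} Λ`, the `i`-th term of the projective resolution, a right `Λ`-module. -/
noncomputable def TCmod (C : ∀ i : ℕ, Set (Amb k X i)) (i : ℕ) : Type :=
  ↥(Finsupp.supported k k (C i)) ⊗[Lam0 k X] Lam k X

noncomputable instance (C : ∀ i : ℕ, Set (Amb k X i)) (i : ℕ) : AddCommGroup (TCmod k X C i) :=
  TensorProduct.addCommGroup (R := Lam0 k X) (M := ↥(Finsupp.supported k k (C i))) (N := Lam k X)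

noncomputable instance (C : ∀ i : ℕ, Set (Amb k X i)) (i : ℕ) :
    Module (Lam k X)ᵐᵒᵖ (TCmod k X C i) :=
  modOpTensor k X ↥(Finsupp.supported k k (C i))

/-- The basis element of `kC^i` given by `p ∈ C^i`. -/
noncomputable def bas (C : ∀ i : ℕ, Set (Amb k X i)) (i : ℕ) (p : Amb k X i)
    (hp : p ∈ C i) : ↥(Finsupp.supported k k (C i)) :=
  ⟨Finsupp.single p 1, Finsupp.single_mem_supported k 1 hp⟩

/-- The generator `(w,z) ⊗ 1` of `kC^i ⊗_{Λ₀} Λ` given by `(w,z) ∈ C^i`. -/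
noncomputable def gen (C : ∀ i : ℕ, Set (Amb k X i)) (i : ℕ) (p : Amb k X i)
    (hp : p ∈ C i) : TCmod k X C i :=
  bas k X C i p hp ⊗ₜ[Lam0 k X] 1

/-- Evaluation of an element of `Λ` at the stationary pair `(z,z)`, a ring homomorphism. -/
noncomputable def evalHom (z : X) : Lam k X →+* k where
  toFun f := f z z
  map_one' := by simp
  map_mul' f g := by
    show (f * g) z z = f z z * g z z
    rw [IncidenceAlgebra.mul_apply, Finset.Icc_self, Finset.sum_singleton]
  map_zero' := rfl
  map_add' f g := rfl

/-- The simple right `Λ`-module `S_z` at the vertex `z`: a copy of `k` on which `λ ∈ Λ`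
acts by multiplication by `λ(z,z)`. -/
def SMod (_z : X) : Type := k

noncomputable instance (z : X) : AddCommGroup (SMod k X z) := inferInstanceAs (AddCommGroup k)
noncomputable instance (z : X) : Module k (SMod k X z) := inferInstanceAs (Module k k)
instance (z : X) : One (SMod k X z) := ⟨(1 : k)⟩

/-- The right `Λ`-module structure on `S_z`. -/
noncomputable instance (z : X) : Module (Lam k X)ᵐᵒᵖ (SMod k X z) :=
  Module.compHom k ((evalHom k X z).fromOpposite (fun a b => mul_comm _ _))

/-- The right `Λ₀`-module structure on `S_z` (the restriction of the `Λ`-action). -/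
noncomputable instance (z : X) : Module (Lam0 k X) (SMod k X z) :=
  Module.compHom k (Pi.evalRingHom (fun _ : X => k) z)

instance (z : X) : SMulCommClass (Lam k X)ᵐᵒᵖ k (SMod k X z) where
  smul_comm a c m := mul_left_comm (evalHom k X z (MulOpposite.unop a)) c m

instance (z : X) : SMulCommClass k (Lam k X)ᵐᵒᵖ (SMod k X z) where
  smul_comm c a m := (mul_left_comm (evalHom k X z (MulOpposite.unop a)) c m).symm

/-- The indecomposable projective right `Λ`-module `P_z = c_z Λ`. -/
noncomputable def PMod (z : X) : Submodule (Lam k X)ᵐᵒᵖ (Lam k X) :=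
  Submodule.span (Lam k X)ᵐᵒᵖ {statp k X z}

/-- The radical `M · J(Λ)` of a right `Λ`-module `M`, where `J(Λ)` is the Jacobson radical. -/
noncomputable def radMod (M : Type) [AddCommGroup M] [Module (Lam k X)ᵐᵒᵖ M] :
    Submodule (Lam k X)ᵐᵒᵖ M :=
  Submodule.span (Lam k X)ᵐᵒᵖ
    {m | ∃ a ∈ Ideal.jacobson (⊥ : Ideal (Lam k X)ᵐᵒᵖ), ∃ n : M, m = a • n}

/-- `|B^i_b|`: the number of `i`-cycles with second coordinate `b`. -/
noncomputable def Bcard (C : ∀ i : ℕ, Set (Amb k X i)) (i : ℕ) (b : X) : ℕ :=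
  Set.ncard {p : Amb k X i | p ∈ C i ∧ vtx k X i p = b}

/-- The predicate singling out the differentials `d_{i+1} : kC^{i+1} ⊗_{Λ₀} Λ → kC^i ⊗_{Λ₀} Λ`
of the resolution: `d ((w,z) ⊗ 1) = w ⊗ q_z` for `(w,z) ∈ C^{i+1}`. (These properties determine
the maps `d` uniquely.) -/
def IsDiff {x : X} (D : CycleData k X x)
    (d : ∀ i : ℕ, TCmod k X D.C (i + 1) →ₗ[(Lam k X)ᵐᵒᵖ] TCmod k X D.C i) : Prop :=
  ∀ (i : ℕ) (p : Amb k X (i + 1)) (hp : p ∈ D.C (i + 1))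
    (w : ↥(Finsupp.supported k k (D.C i))) (_hw : (w : Amb k X i →₀ k) = p.1),
    d i (gen k X D.C (i + 1) p hp) = w ⊗ₜ[Lam0 k X] qel k X (vtx k X (i + 1) p)

/-! ### Auxiliary lemmas -/

section Aux

variable {k X}

noncomputable instance modOpTensorSupp (C : ∀ i : ℕ, Set (Amb k X i)) (i : ℕ) :
    Module (Lam k X)ᵐᵒᵖ (↥(Finsupp.supported k k (C i)) ⊗[Lam0 k X] Lam k X) :=
  modOpTensor k X ↥(Finsupp.supported k k (C i))

lemma aux_cpath_apply (a b a' b' : X) :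
    cpath k X a b a' b' = if a' = a ∧ b' = b ∧ a ≤ b then 1 else 0 := rfl

lemma aux_statp_apply (z a b : X) :
    statp k X z a b = if a = z ∧ b = z then 1 else 0 := by
  rw [statp, aux_cpath_apply]
  by_cases h : a = z ∧ b = z
  · obtain ⟨rfl, rfl⟩ := h
    rw [if_pos ⟨rfl, rfl, le_rfl⟩, if_pos ⟨rfl, rfl⟩]
  · rw [if_neg h, if_neg (fun hh => h ⟨hh.1, hh.2.1⟩)]

lemma aux_diagHom_apply (f : Lam0 k X) (a b : X) :
    diagHom k X f a b = if a = b then f a else 0 := rfl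

lemma aux_diagHom_mul_apply (f : Lam0 k X) (lam : Lam k X) (a b : X) :
    (diagHom k X f * lam) a b = f a * lam a b := by
  by_cases hab : a ≤ b
  · rw [IncidenceAlgebra.mul_apply]
    rw [Finset.sum_eq_single a]
    · rw [aux_diagHom_apply, if_pos rfl]
    · intro c hc hca
      rw [aux_diagHom_apply, if_neg (Ne.symm hca), zero_mul]
    · intro h
      exact absurd (Finset.mem_Icc.2 ⟨le_rfl, hab⟩) h
  · rw [IncidenceAlgebra.apply_eq_zero_of_not_le hab,
      IncidenceAlgebra.apply_eq_zero_of_not_le hab, mul_zero]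

lemma aux_mul_diag (f g : Lam k X) (a : X) : (f * g) a a = f a a * g a a := by
  rw [IncidenceAlgebra.mul_apply, Finset.Icc_self, Finset.sum_singleton]

lemma aux_qel_apply (z u c : X) :
    qel k X z u c = if u ≤ z ∧ c = z then 1 else 0 := by
  have hsum : ∀ (s : Finset X) (F : X → Lam k X), (∑ t ∈ s, F t) u c = ∑ t ∈ s, F t u c :=
    fun s F => map_sum (AddMonoidHom.mk' (fun f : Lam k X => f u c) (fun f g => rfl)) F s
  rw [qel, hsum]
  by_cases h : u ≤ z ∧ c = z
  · rw [if_pos h]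
    have hmem : u ∈ Finset.filter (fun x => x ≤ z) Finset.univ :=
      Finset.mem_filter.2 ⟨Finset.mem_univ u, h.1⟩
    rw [Finset.sum_eq_single_of_mem u hmem
      (fun b _ hbu => by
        rw [aux_cpath_apply, if_neg]
        rintro ⟨rfl, -, -⟩; exact hbu rfl)]
    rw [aux_cpath_apply, if_pos ⟨rfl, h.2, h.1⟩]
  · rw [if_neg h]
    apply Finset.sum_eq_zero
    intro b hb
    rw [aux_cpath_apply, if_neg]
    rintro ⟨rfl, rfl, hle⟩
    exact h ⟨hle, rfl⟩

lemma aux_qel_mul_apply (z : X) (lam : Lam k X) (u b : X) :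
    (qel k X z * lam) u b = if u ≤ z then lam z b else 0 := by
  by_cases hub : u ≤ b
  · rw [IncidenceAlgebra.mul_apply]
    by_cases h : u ≤ z ∧ z ≤ b
    · rw [Finset.sum_eq_single z]
      · rw [aux_qel_apply, if_pos ⟨h.1, rfl⟩, one_mul, if_pos h.1]
      · intro c hc hcz
        rw [aux_qel_apply, if_neg (fun hh => hcz hh.2), zero_mul]
      · intro hz
        exact absurd (Finset.mem_Icc.2 ⟨h.1, h.2⟩) hz
    · have hzero : ∀ c ∈ Finset.Icc u b, qel k X z u c * lam c b = 0 := by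
        intro c hc
        rw [aux_qel_apply, if_neg, zero_mul]
        rintro ⟨huz, rfl⟩
        exact h ⟨huz, (Finset.mem_Icc.1 hc).2⟩
      rw [Finset.sum_eq_zero hzero]
      by_cases huz : u ≤ z
      · rw [if_pos huz, IncidenceAlgebra.apply_eq_zero_of_not_le (fun hzb => h ⟨huz, hzb⟩)]
      · rw [if_neg huz]
  · rw [IncidenceAlgebra.apply_eq_zero_of_not_le hub]
    by_cases huz : u ≤ z
    · rw [if_pos huz, IncidenceAlgebra.apply_eq_zero_of_not_le
        (fun hzb => hub (huz.trans hzb))]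
    · rw [if_neg huz]

end Aux
section Jac

variable {k X}

lemma aux_pow_diag_zero (mu : Lam k X) (hmu : ∀ a, mu a a = 0) :
    ∀ (m : ℕ) (a b : X), (Finset.Icc a b).card ≤ m → (mu ^ m) a b = 0 := by
  intro m
  induction m with
  | zero =>
    intro a b hab
    have hnab : ¬ a ≤ b := by
      intro hle
      have : 0 < (Finset.Icc a b).card :=
        Finset.card_pos.2 ⟨a, Finset.mem_Icc.2 ⟨le_rfl, hle⟩⟩
      omega
    rw [pow_zero, IncidenceAlgebra.one_apply, if_neg (fun h : a = b => hnab (le_of_eq h))]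
  | succ m ih =>
    intro a b hab
    rw [pow_succ']
    rw [IncidenceAlgebra.mul_apply]
    apply Finset.sum_eq_zero
    intro c hc
    rcases eq_or_ne c a with rfl | hca
    · rw [hmu c, zero_mul]
    · have hmemc := Finset.mem_Icc.1 hc
      have hsub : Finset.Icc c b ⊆ (Finset.Icc a b).erase a := by
        intro t ht
        have hmt := Finset.mem_Icc.1 ht
        refine Finset.mem_erase.2 ⟨?_, Finset.mem_Icc.2 ⟨hmemc.1.trans hmt.1, hmt.2⟩⟩
        intro hta
        exact hca (le_antisymm (hta ▸ hmt.1) hmemc.1)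
      have hcard : (Finset.Icc c b).card ≤ m := by
        have h1 := Finset.card_le_card hsub
        have h2 : ((Finset.Icc a b).erase a).card = (Finset.Icc a b).card - 1 :=
          Finset.card_erase_of_mem (Finset.mem_Icc.2 ⟨le_rfl, hmemc.1.trans hmemc.2⟩)
        omega
      rw [ih c b hcard, mul_zero]

lemma aux_diag_zero_nilpotent (mu : Lam k X) (hmu : ∀ a, mu a a = 0) :
    IsNilpotent mu := by
  refine ⟨Fintype.card X + 1, ?_⟩
  ext a b _
  have h0 : (0 : Lam k X) a b = 0 := rfl
  rw [h0]
  exact aux_pow_diag_zero mu hmu _ a b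
    (le_trans (Finset.card_le_univ _) (Nat.le_succ _))

lemma aux_diagzero_mem_jacobson (mu : Lam k X) (hmu : ∀ a, mu a a = 0) :
    MulOpposite.op mu ∈ Ideal.jacobson (⊥ : Ideal (Lam k X)ᵐᵒᵖ) := by
  rw [Ideal.jacobson]
  rw [Submodule.mem_sInf]
  rintro J ⟨-, hJmax⟩
  by_contra hmem
  have hlt : J < J ⊔ Ideal.span {MulOpposite.op mu} := by
    rw [left_lt_sup]
    intro hle
    exact hmem (hle (Ideal.subset_span rfl))
  have htop : J ⊔ Ideal.span {MulOpposite.op mu} = ⊤ := hJmax.out.2 _ hlt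
  have h1 : (1 : (Lam k X)ᵐᵒᵖ) ∈ J ⊔ Ideal.span {MulOpposite.op mu} := htop ▸ trivial
  obtain ⟨y, hy, w, hw, hyw⟩ := Submodule.mem_sup.1 h1
  obtain ⟨r, rfl⟩ := Ideal.mem_span_singleton'.1 hw
  have hnil : IsNilpotent (r * MulOpposite.op mu) := by
    have : r * MulOpposite.op mu = MulOpposite.op (mu * r.unop) := rfl
    rw [this]
    obtain ⟨n, hn⟩ := aux_diag_zero_nilpotent (mu * r.unop)
      (fun a => by rw [aux_mul_diag, hmu, zero_mul])
    exact ⟨n, by rw [← MulOpposite.op_pow, hn, MulOpposite.op_zero]⟩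
  have hyunit : IsUnit y := by
    have : y = 1 - r * MulOpposite.op mu := by
      rw [← hyw]; abel
    rw [this]
    exact hnil.isUnit_one_sub
  exact hJmax.ne_top (Ideal.eq_top_of_isUnit_mem J hy hyunit)

lemma aux_evalop_ker_max (z : X) :
    (RingHom.ker ((evalHom k X z).fromOpposite (fun a b => mul_comm _ _))).IsMaximal := by
  set phi := (evalHom k X z).fromOpposite (fun a b => mul_comm _ _) with hphi
  constructor
  constructor
  · intro htop
    have h1 : (1 : (Lam k X)ᵐᵒᵖ) ∈ RingHom.ker phi := htop ▸ trivial
    rw [RingHom.mem_ker, map_one] at h1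
    exact one_ne_zero h1
  · intro J hJ
    obtain ⟨a, haJ, hak⟩ := SetLike.exists_of_lt hJ
    have hc : phi a ≠ 0 := fun h => hak (RingHom.mem_ker.2 h)
    rw [Ideal.eq_top_iff_one]
    set y := (algebraMap k (Lam k X)ᵐᵒᵖ (phi a)⁻¹) * a with hy
    have hyJ : y ∈ J := J.mul_mem_left _ haJ
    have hphiy : phi y = 1 := by
      rw [hy, map_mul]
      have halg : ∀ c : k, phi (algebraMap k (Lam k X)ᵐᵒᵖ c) = c := by
        intro c
        show evalHom k X z (MulOpposite.unop (algebraMap k (Lam k X)ᵐᵒᵖ c)) = c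
        rw [MulOpposite.algebraMap_apply, MulOpposite.unop_op]
        show (algebraMap k (Lam k X) c) z z = c
        rw [Algebra.algebraMap_eq_smul_one]
        show c • ((1 : Lam k X) z z) = c
        rw [IncidenceAlgebra.one_apply, if_pos rfl, smul_eq_mul, mul_one]
      rw [halg, inv_mul_cancel₀ hc]
    have h1y : (1 : (Lam k X)ᵐᵒᵖ) - y ∈ RingHom.ker phi := by
      rw [RingHom.mem_ker, map_sub, map_one, hphiy, sub_self]
    have : (1 : (Lam k X)ᵐᵒᵖ) = (1 - y) + y := by abel
    rw [this]
    exact J.add_mem (hJ.le h1y) hyJ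

lemma aux_jacobson_diag (a : (Lam k X)ᵐᵒᵖ)
    (ha : a ∈ Ideal.jacobson (⊥ : Ideal (Lam k X)ᵐᵒᵖ)) (z : X) :
    a.unop z z = 0 := by
  rw [Ideal.jacobson, Submodule.mem_sInf] at ha
  have := ha (RingHom.ker ((evalHom k X z).fromOpposite (fun a b => mul_comm _ _)))
    ⟨bot_le, aux_evalop_ker_max z⟩
  rw [RingHom.mem_ker] at this
  exact this

end Jac
section Mod

variable {k X}

lemma aux_smul_supported_coe (C : ∀ i : ℕ, Set (Amb k X i)) (i : ℕ)
    (r : Lam0 k X) (v : ↥(Finsupp.supported k k (C i))) (q : Amb k X i) :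
    ((r • v : ↥(Finsupp.supported k k (C i))) : Amb k X i →₀ k) q
      = r (vtx k X i q) * (v : Amb k X i →₀ k) q := by
  have h1 : ((r • v : ↥(Finsupp.supported k k (C i))) : Amb k X i →₀ k)
      = phiAmb k X i r (v : Amb k X i →₀ k) := rfl
  rw [h1, phiAmb_apply]

lemma aux_smul_lam (r : Lam0 k X) (lam : Lam k X) :
    r • lam = diagHom k X r * lam := rfl

lemma aux_const_smul (C : ∀ i : ℕ, Set (Amb k X i)) (i : ℕ)
    (c : k) (v : ↥(Finsupp.supported k k (C i))) :
    ((fun _ => c : Lam0 k X)) • v = c • v := by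
  apply Subtype.ext
  apply Finsupp.ext
  intro q
  rw [aux_smul_supported_coe]
  rw [Submodule.coe_smul, Finsupp.smul_apply, smul_eq_mul]

/-- Coefficient extraction on `kC^i ⊗_{Λ₀} Λ`. -/
noncomputable def Psi (C : ∀ i : ℕ, Set (Amb k X i)) (i : ℕ) :
    TCmod k X C i →+ (Amb k X i → X → k) :=
  TensorProduct.liftAddHom
    (AddMonoidHom.mk'
      (fun v => AddMonoidHom.mk'
        (fun lam => fun q b => (v : Amb k X i →₀ k) q * lam (vtx k X i q) b)
        (by
          intro f g
          funext q b
          show _ * (f + g) _ b = _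
          rw [IncidenceAlgebra.add_apply, mul_add]
          rfl))
      (by
        intro v w
        apply AddMonoidHom.ext
        intro lam
        funext q b
        show ((v + w : ↥(Finsupp.supported k k (C i))) : Amb k X i →₀ k) q * _ = _
        rw [Submodule.coe_add, Finsupp.add_apply, add_mul]
        rfl))
    (by
      intro r v lam
      funext q b
      show ((r • v : ↥(Finsupp.supported k k (C i))) : Amb k X i →₀ k) q
          * lam (vtx k X i q) b
        = (v : Amb k X i →₀ k) q * (r • lam) (vtx k X i q) b
      rw [aux_smul_supported_coe, aux_smul_lam, aux_diagHom_mul_apply]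
      ring)

lemma Psi_tmul (C : ∀ i : ℕ, Set (Amb k X i)) (i : ℕ)
    (v : ↥(Finsupp.supported k k (C i))) (lam : Lam k X) (q : Amb k X i) (b : X) :
    Psi C i (v ⊗ₜ[Lam0 k X] lam) q b = (v : Amb k X i →₀ k) q * lam (vtx k X i q) b := rfl

/-- Every element of `kC^i ⊗ Λ` is a `Λᵐᵒᵖ`-combination of the generators. -/
lemma aux_mem_genspan (C : ∀ i : ℕ, Set (Amb k X i)) (i : ℕ) (m : TCmod k X C i) :
    m ∈ Submodule.span (Lam k X)ᵐᵒᵖ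
      {m' : TCmod k X C i | ∃ p hp, m' = gen k X C i p hp} := by
  set S := {m' : TCmod k X C i | ∃ p hp, m' = gen k X C i p hp} with hS
  induction m using TensorProduct.induction_on with
  | zero => exact Submodule.zero_mem _
  | add x y hx hy => exact Submodule.add_mem _ hx hy
  | tmul v lam =>
    obtain ⟨g, hg⟩ := v
    have hg' : g ∈ Submodule.span k ((fun q => Finsupp.single q (1 : k)) '' C i) := by
      rw [← Finsupp.supported_eq_span_single]
      exact hg
    have key : ∀ g' ∈ Submodule.span k ((fun q => Finsupp.single q (1 : k)) '' C i),
        ∀ (hg' : g' ∈ Finsupp.supported k k (C i)) (lam : Lam k X),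
        (⟨g', hg'⟩ ⊗ₜ[Lam0 k X] lam : TCmod k X C i) ∈ Submodule.span (Lam k X)ᵐᵒᵖ S := by
      intro g' hgs
      induction hgs using Submodule.span_induction with
      | mem w hw =>
        obtain ⟨q, hqC, rfl⟩ := hw
        intro hmem lam
        have hb : (⟨Finsupp.single q (1 : k), hmem⟩ : ↥(Finsupp.supported k k (C i)))
            = bas k X C i q hqC := Subtype.ext rfl
        rw [hb]
        have hgen : (bas k X C i q hqC ⊗ₜ[Lam0 k X] lam : TCmod k X C i)
            = (MulOpposite.op lam) • gen k X C i q hqC := by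
          show _ = bas k X C i q hqC ⊗ₜ[Lam0 k X] (1 * lam)
          rw [one_mul]
        rw [hgen]
        exact Submodule.smul_mem _ _ (Submodule.subset_span (R := (Lam k X)ᵐᵒᵖ) (s := S) ⟨q, hqC, rfl⟩)
      | zero =>
        intro hmem lam
        have h0 : (⟨0, hmem⟩ : ↥(Finsupp.supported k k (C i))) = 0 := Subtype.ext rfl
        rw [h0, TensorProduct.zero_tmul]
        exact Submodule.zero_mem _
      | add w1 w2 hw1 hw2 ih1 ih2 =>
        intro hmem lam
        have hm1 : w1 ∈ Finsupp.supported k k (C i) := by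
          rw [Finsupp.supported_eq_span_single]; exact hw1
        have hm2 : w2 ∈ Finsupp.supported k k (C i) := by
          rw [Finsupp.supported_eq_span_single]; exact hw2
        have hsplit : (⟨w1 + w2, hmem⟩ : ↥(Finsupp.supported k k (C i)))
            = ⟨w1, hm1⟩ + ⟨w2, hm2⟩ := Subtype.ext rfl
        rw [hsplit, TensorProduct.add_tmul]
        exact Submodule.add_mem _ (ih1 hm1 lam) (ih2 hm2 lam)
      | smul c w hw ih =>
        intro hmem lam
        have hm : w ∈ Finsupp.supported k k (C i) := by
          rw [Finsupp.supported_eq_span_single]; exact hw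
        have hsplit : (⟨c • w, hmem⟩ : ↥(Finsupp.supported k k (C i)))
            = c • (⟨w, hm⟩ : ↥(Finsupp.supported k k (C i))) := Subtype.ext rfl
        rw [hsplit, ← aux_const_smul, TensorProduct.smul_tmul]
        exact ih hm _
    exact key g hg' hg lam

lemma aux_bas_tmul (C : ∀ i : ℕ, Set (Amb k X i)) (i : ℕ) (p : Amb k X i)
    (hp : p ∈ C i) (mu : Lam k X) :
    bas k X C i p hp ⊗ₜ[Lam0 k X] mu = (MulOpposite.op mu) • gen k X C i p hp := by
  show _ = bas k X C i p hp ⊗ₜ[Lam0 k X] (1 * mu)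
  rw [one_mul]

lemma aux_d_tmul {x : X} (D : CycleData k X x)
    (d : ∀ i : ℕ, TCmod k X D.C (i + 1) →ₗ[(Lam k X)ᵐᵒᵖ] TCmod k X D.C i)
    (hd : IsDiff k X D d) (i : ℕ) (p : Amb k X (i + 1)) (hp : p ∈ D.C (i + 1))
    (w : ↥(Finsupp.supported k k (D.C i))) (hw : (w : Amb k X i →₀ k) = p.1)
    (mu : Lam k X) :
    d i (bas k X D.C (i + 1) p hp ⊗ₜ[Lam0 k X] mu)
      = w ⊗ₜ[Lam0 k X] (qel k X (vtx k X (i + 1) p) * mu) := by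
  rw [aux_bas_tmul, map_smul, hd i p hp w hw]
  rfl

lemma aux_cycle_supp {x : X} (D : CycleData k X x) (i : ℕ) (p : Amb k X (i + 1))
    (hp : p ∈ D.C (i + 1)) :
    p.1 ∈ Finsupp.supported k k (D.C i) ∧
      ∀ q : Amb k X i, p.1 q ≠ 0 → vtx k X i q < vtx k X (i + 1) p := by
  cases i with
  | zero =>
    rw [D.hC1] at hp
    obtain ⟨y, hxy, hpeq⟩ := hp
    subst hpeq
    constructor
    · exact Finsupp.single_mem_supported k 1 (by rw [D.hC0]; rfl)
    · intro q hq
      have hqx : q = x := by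
        by_contra hne
        change (Finsupp.single x (1 : k) : X →₀ k) q ≠ 0 at hq
        exact hq (Finsupp.single_eq_of_ne hne)
      subst hqx
      exact hxy.lt
  | succ j =>
    have hB : p.1 ∈ Bset k X D.C j p.2 := by
      show (⟨p.1, p.2⟩ : Amb k X (j + 2)) ∈ D.C (j + 2)
      have : (⟨p.1, p.2⟩ : Amb k X (j + 2)) = p := rfl
      rw [this]
      exact hp
    have hKz : p.1 ∈ Kz k X D.C j p.2 := by
      have h1 : Submodule.span k (Bset k X D.C j p.2) ≤ Kz k X D.C j p.2 := by
        rw [← D.compl j p.2]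
        exact le_sup_left
      exact h1 (Submodule.subset_span hB)
    obtain ⟨⟨-, hsupp⟩, hlt⟩ := hKz
    refine ⟨hsupp, fun q hq => ?_⟩
    have := (Finsupp.mem_supported' (R := k) (p := p.1)).1 hlt q
    by_contra hnlt
    exact hq (this (fun hmem => hnlt hmem))

end Mod
section Core

variable {k X}

lemma aux_group_coeff {V : Type} [AddCommGroup V] [Module k V] [DecidableEq V]
    (B : Set V) (hind : LinearIndependent k (Subtype.val : B → V))
    {n : ℕ} (T : Finset (Fin n)) (w : Fin n → V) (c : Fin n → k)
    (hw : ∀ j ∈ T, w j ∈ B)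
    (hsum : ∑ j ∈ T, c j • w j = 0)
    (w₀ : V) (hw₀ : w₀ ∈ B) :
    ∑ j ∈ T.filter (fun j => w j = w₀), c j = 0 := by
  set l : ↥B →₀ k := ∑ j ∈ T.attach, Finsupp.single ⟨w j, hw j j.2⟩ (c j) with hl
  have hlc : Finsupp.linearCombination k (Subtype.val : B → V) l = 0 := by
    rw [hl, map_sum]
    rw [show (0 : V) = ∑ j ∈ T, c j • w j from hsum.symm]
    rw [← Finset.sum_attach T (fun j => c j • w j)]
    apply Finset.sum_congr rfl
    intro j _
    rw [Finsupp.linearCombination_single]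
  have hl0 : l = 0 := linearIndependent_iff.1 hind l hlc
  have hterm : ∀ j ∈ T.attach,
      (Finsupp.single (⟨w ↑j, hw ↑j j.2⟩ : ↥B) (c ↑j)) ⟨w₀, hw₀⟩
        = if w ↑j = w₀ then c ↑j else 0 := by
    intro j _
    rw [Finsupp.single_apply]
    by_cases hj : w ↑j = w₀
    · rw [if_pos (Subtype.ext hj), if_pos hj]
    · rw [if_neg (fun h => hj (Subtype.ext_iff.1 h)), if_neg hj]
  calc ∑ j ∈ T.filter (fun j => w j = w₀), c j
      = ∑ j ∈ T, if w j = w₀ then c j else 0 := Finset.sum_filter _ _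
    _ = ∑ j ∈ T.attach, if w ↑j = w₀ then c ↑j else 0 := (Finset.sum_attach _ _).symm
    _ = ∑ j ∈ T.attach,
          (Finsupp.single (⟨w ↑j, hw ↑j j.2⟩ : ↥B) (c ↑j)) ⟨w₀, hw₀⟩ :=
        (Finset.sum_congr rfl hterm).symm
    _ = l ⟨w₀, hw₀⟩ := (Finsupp.finset_sum_apply _ _ _).symm
    _ = 0 := by rw [hl0]; rfl

lemma aux_core {V : Type} [AddCommGroup V] [Module k V] [DecidableEq V]
    (B : X → Set V)
    (hind : ∀ z, LinearIndependent k (Subtype.val : B z → V))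
    (hdisj : ∀ z, Submodule.span k (B z)
      ⊓ (⨆ z' ∈ {z' : X | z' < z}, Submodule.span k (B z')) = ⊥)
    {n : ℕ} (w : Fin n → V) (zf : Fin n → X) (c : Fin n → k)
    (hw : ∀ j, w j ∈ B (zf j))
    (z : X) (hc : ∀ j, c j ≠ 0 → zf j ≤ z)
    (hsum : ∑ j, c j • w j = 0)
    (w₀ : V) (hw₀ : w₀ ∈ B z) :
    ∑ j ∈ Finset.univ.filter (fun j => zf j = z ∧ w j = w₀), c j = 0 := by
  set T : Finset (Fin n) := Finset.univ.filter (fun j => zf j = z) with hT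
  have hsplit : ∑ j ∈ T, c j • w j
      + ∑ j ∈ Finset.univ.filter (fun j => ¬ zf j = z), c j • w j = 0 := by
    rw [Finset.sum_filter_add_sum_filter_not]
    exact hsum
  have htopmem : ∑ j ∈ T, c j • w j ∈ Submodule.span k (B z) := by
    apply Submodule.sum_mem
    intro j hj
    have hjz : zf j = z := (Finset.mem_filter.1 hj).2
    exact Submodule.smul_mem _ _ (Submodule.subset_span (hjz ▸ hw j))
  have hlowmem : ∑ j ∈ T, c j • w j
      ∈ ⨆ z' ∈ {z' : X | z' < z}, Submodule.span k (B z') := by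
    have heq : ∑ j ∈ T, c j • w j
        = - ∑ j ∈ Finset.univ.filter (fun j => ¬ zf j = z), c j • w j := by
      rw [eq_neg_iff_add_eq_zero]
      exact hsplit
    rw [heq]
    apply Submodule.neg_mem
    apply Submodule.sum_mem
    intro j hj
    have hjz : ¬ zf j = z := (Finset.mem_filter.1 hj).2
    by_cases hcj : c j = 0
    · rw [hcj, zero_smul]
      exact Submodule.zero_mem _
    · have hlt : zf j < z := lt_of_le_of_ne (hc j hcj) hjz
      have h1 : Submodule.span k (B (zf j))
          ≤ ⨆ z' ∈ {z' : X | z' < z}, Submodule.span k (B z') :=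
        le_iSup₂ (f := fun z' (_ : z' ∈ {z' : X | z' < z}) => Submodule.span k (B z'))
          (zf j) hlt
      exact h1 (Submodule.smul_mem _ _ (Submodule.subset_span (hw j)))
  have htop0 : ∑ j ∈ T, c j • w j = 0 := by
    have := hdisj z ▸ Submodule.mem_inf.2 ⟨htopmem, hlowmem⟩
    exact this
  have hgrp := aux_group_coeff (B z) (hind z) T w c
    (fun j hj => (Finset.mem_filter.1 hj).2 ▸ hw j) htop0 w₀ hw₀
  rw [hT, Finset.filter_filter] at hgrp
  exact hgrp

end Core
section Fam

variable {k X}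

/-- The family `B^{i+1}_z' = {w | (w,z) ∈ C^{i+1}}`. -/
def BF {x : X} (D : CycleData k X x) (i : ℕ) (z : X) : Set (Amb k X i →₀ k) :=
  {w | (⟨w, z⟩ : Amb k X (i + 1)) ∈ D.C (i + 1)}

lemma aux_BF_zero {x : X} (D : CycleData k X x) (z : X) :
    BF D 0 z = {w : Amb k X 0 →₀ k | x ⋖ z ∧ w = Finsupp.single x 1} := by
  ext w
  show (⟨w, z⟩ : Amb k X 1) ∈ D.C 1 ↔ _
  rw [D.hC1]
  constructor
  · rintro ⟨y, hxy, heq⟩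
    have h1 : w = Finsupp.single x 1 := congrArg Prod.fst heq
    have h2 : z = y := congrArg Prod.snd heq
    exact ⟨h2 ▸ hxy, h1⟩
  · rintro ⟨hxz, rfl⟩
    exact ⟨z, hxz, rfl⟩

lemma aux_BF_succ {x : X} (D : CycleData k X x) (j : ℕ) (z : X) :
    BF D (j + 1) z = Bset k X D.C j z := rfl

lemma aux_hind {x : X} (D : CycleData k X x) (i : ℕ) (z : X) :
    LinearIndependent k (Subtype.val : BF D i z → (Amb k X i →₀ k)) := by
  cases i with
  | zero =>
    by_cases hxz : x ⋖ z
    · have hset : BF D 0 z = {Finsupp.single x 1} := by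
        rw [aux_BF_zero]
        ext w
        simp [hxz]
        exact Iff.rfl
      rw [hset]
      haveI : Subsingleton ↥({Finsupp.single x 1} : Set (Amb k X 0 →₀ k)) :=
        ⟨fun a b => Subtype.ext ((Set.mem_singleton_iff.1 a.2).trans (Set.mem_singleton_iff.1 b.2).symm)⟩
      exact LinearIndependent.of_subsingleton ⟨_, rfl⟩ (fun h => one_ne_zero (Finsupp.single_eq_zero.1 h))
    · have hset : BF D 0 z = ∅ := by
        rw [aux_BF_zero]
        ext w
        simp [hxz]
      rw [hset]
      exact linearIndependent_empty k _
  | succ j => exact D.indep j z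

lemma aux_hdisj {x : X} (D : CycleData k X x) (i : ℕ) (z : X) :
    Submodule.span k (BF D i z)
      ⊓ (⨆ z' ∈ {z' : X | z' < z}, Submodule.span k (BF D i z')) = ⊥ := by
  cases i with
  | zero =>
    by_cases hxz : x ⋖ z
    · have hlow : ∀ z'' : X, z'' < z → BF D 0 z'' = ∅ := by
        intro z'' hz''
        rw [aux_BF_zero]
        ext w
        simp only [Set.mem_setOf_eq, Set.mem_empty_iff_false, iff_false, not_and]
        intro hcov
        exact absurd hz'' (hxz.2 hcov.lt)
      have hsup : (⨆ z' ∈ {z' : X | z' < z}, Submodule.span k (BF D 0 z')) = ⊥ := by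
        apply le_antisymm _ bot_le
        apply iSup₂_le
        intro z'' hz''
        rw [hlow z'' hz'', Submodule.span_empty]
      rw [hsup, inf_bot_eq]
    · have hset : BF D 0 z = ∅ := by
        rw [aux_BF_zero]
        ext w
        simp [hxz]
      rw [hset, Submodule.span_empty, bot_inf_eq]
  | succ j =>
    have h1 : (⨆ z' ∈ {z' : X | z' < z}, Submodule.span k (BF D (j + 1) z'))
        ≤ Kpred k X D.C j z := by
      apply iSup₂_le
      intro z'' hz''
      obtain ⟨z', hle, hcov⟩ := exists_le_covBy_of_lt hz''
      have hspan : Submodule.span k (BF D (j + 1) z'') ≤ Kz k X D.C j z'' := by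
        rw [aux_BF_succ, ← D.compl j z'']
        exact le_sup_left
      have hmono : Kz k X D.C j z'' ≤ Kz k X D.C j z' := by
        apply inf_le_inf_left
        apply Finsupp.supported_mono
        intro p hp
        exact lt_of_lt_of_le hp hle
      refine le_trans (le_trans hspan hmono) ?_
      exact le_iSup₂ (f := fun z' (_ : z' ∈ {z' : X | z' ⋖ z}) => Kz k X D.C j z') z' hcov
    rw [eq_bot_iff, ← D.disj j z]
    exact inf_le_inf_left _ h1

end Fam
section Final

variable {k X}

lemma aux_diagHom_indicator (z : X) :
    diagHom k X (fun a => if a = z then (1 : k) else 0) = statp k X z := by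
  ext a b _
  rw [aux_diagHom_apply, aux_statp_apply]
  by_cases hab : a = b
  · subst hab
    by_cases haz : a = z
    · rw [if_pos rfl, if_pos haz, if_pos ⟨haz, haz⟩]
    · rw [if_pos rfl, if_neg haz, if_neg (fun hh => haz hh.1)]
  · rw [if_neg hab, if_neg (fun hh : a = z ∧ b = z => hab (hh.1.trans hh.2.symm))]

lemma aux_e_smul_bas (C : ∀ i : ℕ, Set (Amb k X i)) (i : ℕ) (p : Amb k X i)
    (hp : p ∈ C i) :
    ((fun a => if a = vtx k X i p then (1 : k) else 0 : Lam0 k X)) • bas k X C i p hp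
      = bas k X C i p hp := by
  apply Subtype.ext
  apply Finsupp.ext
  intro q
  classical
  rw [aux_smul_supported_coe]
  show (if vtx k X i q = vtx k X i p then (1 : k) else 0) * Finsupp.single p 1 q
    = Finsupp.single p 1 q
  by_cases hq : p = q
  · subst hq
    rw [if_pos rfl, one_mul]
  · rw [Finsupp.single_apply, if_neg hq, mul_zero]

lemma aux_smul_statp_diag (mu : Lam k X) (z a : X) :
    ((mu z z) • statp k X z) a a = mu z z * statp k X z a a := rfl

end Final

/-- For every `i ≥ 1`, `ker d_i` is contained in the radical
`(kC^i ⊗_{Λ₀} Λ)·J(Λ)` of the right `Λ`-module `kC^i ⊗_{Λ₀} Λ`. -/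
theorem stmt6 (x : X) (D : CycleData k X x)
    (d : ∀ i : ℕ, TCmod k X D.C (i + 1) →ₗ[(Lam k X)ᵐᵒᵖ] TCmod k X D.C i)
    (hd : IsDiff k X D d) (i : ℕ) :
    LinearMap.ker (d i) ≤ radMod k X (TCmod k X D.C (i + 1)) := by
  classical
  intro m hm
  rw [LinearMap.mem_ker] at hm
  obtain ⟨n, f, g, hrep⟩ := Submodule.mem_span_set'.1 (aux_mem_genspan D.C (i + 1) m)
  choose p hp hg using fun j : Fin n => (g j).2
  have hterm : ∀ j : Fin n, f j • (g j : TCmod k X D.C (i + 1))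
      = bas k X D.C (i + 1) (p j) (hp j) ⊗ₜ[Lam0 k X] (f j).unop := by
    intro j
    rw [hg j, aux_bas_tmul, MulOpposite.op_unop]
  have hrepr : m = ∑ j, (show TCmod k X D.C (i + 1) from bas k X D.C (i + 1) (p j) (hp j) ⊗ₜ[Lam0 k X] (f j).unop) := by
    rw [← hrep]
    exact Finset.sum_congr rfl (fun j _ => hterm j)
  have hsupp := fun j : Fin n => aux_cycle_supp D i (p j) (hp j)
  -- the image of `m` under the differential, rewritten
  have hdm : (0 : TCmod k X D.C i)
      = ∑ j, (show TCmod k X D.C i from (⟨(p j).1, (hsupp j).1⟩ : ↥(Finsupp.supported k k (D.C i)))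
          ⊗ₜ[Lam0 k X] (qel k X (vtx k X (i + 1) (p j)) * (f j).unop)) := by
    rw [← hm, hrepr, map_sum]
    exact Finset.sum_congr rfl (fun j _ => aux_d_tmul D d hd i (p j) (hp j) _ rfl _)
  -- coefficient identities from `d i m = 0`
  have hcoeff : ∀ (q : Amb k X i) (b : X),
      (0 : k) = ∑ j, (p j).1 q *
        (if vtx k X i q ≤ vtx k X (i + 1) (p j)
          then (f j).unop (vtx k X (i + 1) (p j)) b else 0) := by
    intro q b
    have h1 := congrArg (fun t => Psi D.C i t q b) hdm
    simp only [map_zero, map_sum, Finset.sum_apply, Pi.zero_apply] at h1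
    calc (0 : k)
        = ∑ j, Psi D.C i ((⟨(p j).1, (hsupp j).1⟩ : ↥(Finsupp.supported k k (D.C i)))
            ⊗ₜ[Lam0 k X] (qel k X (vtx k X (i + 1) (p j)) * (f j).unop)) q b :=
          h1.trans ((congrFun (congrFun (map_sum (Psi D.C i) _ Finset.univ) q) b).trans
            ((congrFun (Finset.sum_apply q _ _) b).trans (Finset.sum_apply b _ _)))
      _ = _ := by
          apply Finset.sum_congr rfl
          intro j _
          rw [Psi_tmul]
          show (p j).1 q * (qel k X (vtx k X (i + 1) (p j)) * (f j).unop) (vtx k X i q) b = _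
          rw [aux_qel_mul_apply]
  -- the top coefficients vanish
  have key : ∀ (p₀ : Amb k X (i + 1)), p₀ ∈ D.C (i + 1) →
      ∑ j ∈ Finset.univ.filter (fun j => p j = p₀), (f j).unop p₀.2 p₀.2 = 0 := by
    intro p₀ hp₀
    -- the vector identity in `kC^i`
    have hvec : ∑ j, ((f j).unop (vtx k X (i + 1) (p j)) p₀.2) • (p j).1
        = (0 : Amb k X i →₀ k) := by
      apply Finsupp.ext
      intro q
      rw [Finsupp.finset_sum_apply, Finsupp.zero_apply]
      refine Eq.trans (Finset.sum_congr rfl ?_) (hcoeff q p₀.2).symm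
      intro j _
      rw [Finsupp.smul_apply, smul_eq_mul]
      by_cases h0 : (p j).1 q = 0
      · rw [h0, mul_zero, zero_mul]
      · rw [if_pos ((hsupp j).2 q h0).le, mul_comm]
    have hwmem : ∀ j : Fin n, (p j).1 ∈ BF D i (vtx k X (i + 1) (p j)) := by
      intro j
      show (⟨(p j).1, (p j).2⟩ : Amb k X (i + 1)) ∈ D.C (i + 1)
      exact hp j
    have hw₀ : p₀.1 ∈ BF D i p₀.2 := by
      show (⟨p₀.1, p₀.2⟩ : Amb k X (i + 1)) ∈ D.C (i + 1)
      exact hp₀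
    have hcore := aux_core (BF D i) (fun z => aux_hind D i z) (fun z => aux_hdisj D i z)
      (fun j => (p j).1) (fun j => vtx k X (i + 1) (p j))
      (fun j => (f j).unop (vtx k X (i + 1) (p j)) p₀.2)
      hwmem p₀.2
      (fun j hcj => by
        by_contra hnle
        exact hcj (IncidenceAlgebra.apply_eq_zero_of_not_le hnle _))
      hvec p₀.1 hw₀
    have hfilter : Finset.univ.filter (fun j => p j = p₀)
        = Finset.univ.filter
            (fun j => vtx k X (i + 1) (p j) = p₀.2 ∧ (p j).1 = p₀.1) := by
      apply Finset.filter_congr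
      intro j _
      constructor
      · rintro rfl
        exact ⟨rfl, rfl⟩
      · rintro ⟨h2, h1⟩
        show p j = p₀
        have : p j = (⟨(p j).1, (p j).2⟩ : Amb k X (i + 1)) := rfl
        rw [this, h1]
        have h2' : (p j).2 = p₀.2 := h2
        rw [h2']
        rfl
    rw [hfilter]
    rw [Finset.sum_congr rfl (fun j hj => ?_)]
    · exact hcore
    · have hj2 : vtx k X (i + 1) (p j) = p₀.2 := (Finset.mem_filter.1 hj).2.1
      rw [show ((f j).unop p₀.2 p₀.2 : k)
        = (f j).unop (vtx k X (i + 1) (p j)) p₀.2 from by rw [hj2]]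
  -- decompose each term into top part plus radical part
  have hradterm : ∀ j : Fin n, ∃ r ∈ radMod k X (TCmod k X D.C (i + 1)),
      bas k X D.C (i + 1) (p j) (hp j) ⊗ₜ[Lam0 k X] (f j).unop
        = (show TCmod k X D.C (i + 1) from bas k X D.C (i + 1) (p j) (hp j) ⊗ₜ[Lam0 k X]
            (((f j).unop (p j).2 (p j).2) • statp k X (p j).2)) + r := by
    intro j
    set z := (p j).2 with hz
    set muj := (f j).unop with hmuj
    set nu := statp k X z * muj - (muj z z) • statp k X z with hnu
    have hnudiag : ∀ a, nu a a = 0 := by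
      intro a
      rw [hnu]
      show (statp k X z * muj) a a - ((muj z z) • statp k X z) a a = 0
      rw [aux_mul_diag, aux_smul_statp_diag, aux_statp_apply]
      by_cases haz : a = z
      · subst haz
        rw [if_pos ⟨rfl, rfl⟩]
        ring
      · rw [if_neg (fun hh => haz hh.1)]
        ring
    have hvtx : vtx k X (i + 1) (p j) = z := rfl
    have h1 : bas k X D.C (i + 1) (p j) (hp j) ⊗ₜ[Lam0 k X] muj
        = bas k X D.C (i + 1) (p j) (hp j) ⊗ₜ[Lam0 k X] (statp k X z * muj) := by
      calc bas k X D.C (i + 1) (p j) (hp j) ⊗ₜ[Lam0 k X] muj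
          = (((fun a => if a = z then (1 : k) else 0 : Lam0 k X))
              • bas k X D.C (i + 1) (p j) (hp j)) ⊗ₜ[Lam0 k X] muj := by
            rw [show ((fun a => if a = z then (1 : k) else 0 : Lam0 k X))
                • bas k X D.C (i + 1) (p j) (hp j)
              = bas k X D.C (i + 1) (p j) (hp j) from hvtx ▸ aux_e_smul_bas D.C (i + 1) (p j) (hp j)]
        _ = bas k X D.C (i + 1) (p j) (hp j) ⊗ₜ[Lam0 k X]
              (((fun a => if a = z then (1 : k) else 0 : Lam0 k X)) • muj) :=
            TensorProduct.smul_tmul _ _ _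
        _ = bas k X D.C (i + 1) (p j) (hp j) ⊗ₜ[Lam0 k X] (statp k X z * muj) := by
            rw [aux_smul_lam, aux_diagHom_indicator]
    refine ⟨bas k X D.C (i + 1) (p j) (hp j) ⊗ₜ[Lam0 k X] nu, ?_, ?_⟩
    · apply Submodule.subset_span
      exact ⟨MulOpposite.op nu, aux_diagzero_mem_jacobson nu hnudiag,
        gen k X D.C (i + 1) (p j) (hp j), aux_bas_tmul D.C (i + 1) (p j) (hp j) nu⟩
    · rw [h1, show statp k X z * muj = (muj z z) • statp k X z + nu from by rw [hnu]; abel,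
        TensorProduct.tmul_add]
      rfl
  choose r hr hreq using hradterm
  -- the sum of the top parts vanishes
  have htop0 : ∑ j, (show TCmod k X D.C (i + 1) from
      bas k X D.C (i + 1) (p j) (hp j) ⊗ₜ[Lam0 k X]
      (((f j).unop (p j).2 (p j).2) • statp k X (p j).2)) = 0 := by
    rw [← Finset.sum_fiberwise_of_maps_to
      (fun j _ => Finset.mem_image_of_mem p (Finset.mem_univ j))
      (fun j => show TCmod k X D.C (i + 1) from
        bas k X D.C (i + 1) (p j) (hp j) ⊗ₜ[Lam0 k X]
        (((f j).unop (p j).2 (p j).2) • statp k X (p j).2))]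
    apply Finset.sum_eq_zero
    intro p₀ hp₀img
    obtain ⟨j₀, -, hj₀⟩ := Finset.mem_image.1 hp₀img
    have hp₀ : p₀ ∈ D.C (i + 1) := hj₀ ▸ hp j₀
    have hcongr : ∀ j ∈ Finset.univ.filter (fun j => p j = p₀),
        (show TCmod k X D.C (i + 1) from
          bas k X D.C (i + 1) (p j) (hp j) ⊗ₜ[Lam0 k X]
            (((f j).unop (p j).2 (p j).2) • statp k X (p j).2))
          = bas k X D.C (i + 1) p₀ hp₀ ⊗ₜ[Lam0 k X]
            (((f j).unop p₀.2 p₀.2) • statp k X p₀.2) := by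
      intro j hj
      have hpj : p j = p₀ := (Finset.mem_filter.1 hj).2
      have hb : bas k X D.C (i + 1) (p j) (hp j) = bas k X D.C (i + 1) p₀ hp₀ :=
        Subtype.ext (by show Finsupp.single (p j) 1 = Finsupp.single p₀ 1; rw [hpj])
      have h2 : (p j).2 = p₀.2 := by rw [hpj]
      rw [hb, h2]
    rw [Finset.sum_congr rfl hcongr]
    exact (TensorProduct.tmul_sum _ _ _).symm.trans ((congrArg _ (Finset.sum_smul.symm.trans
      ((congrArg (fun c => c • statp k X p₀.2) (key p₀ hp₀)).trans (zero_smul _ _)))).trans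
      (TensorProduct.tmul_zero _ _))
  -- conclusion
  have hfinal : m = ∑ j, (show TCmod k X D.C (i + 1) from
      bas k X D.C (i + 1) (p j) (hp j) ⊗ₜ[Lam0 k X]
      (((f j).unop (p j).2 (p j).2) • statp k X (p j).2))
        + ∑ j, r j := by
    calc m = ∑ j, (show TCmod k X D.C (i + 1) from bas k X D.C (i + 1) (p j) (hp j) ⊗ₜ[Lam0 k X] (f j).unop) := hrepr
      _ = ∑ j, ((show TCmod k X D.C (i + 1) from
            bas k X D.C (i + 1) (p j) (hp j) ⊗ₜ[Lam0 k X]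
            (((f j).unop (p j).2 (p j).2) • statp k X (p j).2)) + r j) :=
          Finset.sum_congr rfl (fun j _ => hreq j)
      _ = _ := Finset.sum_add_distrib
  rw [hfinal, htop0, zero_add]
  exact Submodule.sum_mem _ (fun j _ => hr j)
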